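/- arXiv:2511.06416 — 2 statements merged into one kernel-verified Lean document; each statement's English description precedes it below -/
import Mathlib

section
/- Let U_1 ⊂ ... ⊂ U_d be a flag in R^p with dim U_k = q_k, and let u_1,...,u_{q_d} be an orthonormal basis adapted to the flag (so U_k = span{u_1,...,u_{q_k}}). Then the flag-trick operator P = (1/d) Σ_{k=1}^d Π_{U_k} has eigenvector u_j with eigenvalue (d − k_j + 1)/d, where k_j is the smallest index k with j ≤ q_k; vectors orthogonal to U_d have eigenvalue 0. -/
/-! By orthonormality, `u j` lies in `U k` when `j < q k` and is orthogonal to `U k` otherwise,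
so each projection either fixes or kills it; as the flag is increasing, the projections fixing
`u j` are exactly those with `k ≥ k_j`. -/

open Submodule Finset

section
variable {𝕜 E ι : Type*} [RCLike 𝕜] [NormedAddCommGroup E] [InnerProductSpace 𝕜 E]
  {v : ι → E}

theorem Orthonormal.mem_orthogonal_span_image (hv : Orthonormal 𝕜 v) {s : Set ι} {i : ι}
    (hi : i ∉ s) : v i ∈ (span 𝕜 (v '' s))ᗮ := by
  refine (isOrtho_span.mpr ?_).le (mem_span_singleton_self (v i))
  rintro _ rfl _ ⟨a, ha, rfl⟩
  exact hv.2 (ne_of_mem_of_not_mem ha hi).symm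

theorem Orthonormal.starProjection_span_image_apply (hv : Orthonormal 𝕜 v) (s : Set ι)
    [(span 𝕜 (v '' s)).HasOrthogonalProjection] (i : ι) [Decidable (i ∈ s)] :
    (span 𝕜 (v '' s)).starProjection (v i) = if i ∈ s then v i else 0 := by
  split_ifs with hi
  · exact starProjection_eq_self_iff.mpr (subset_span ⟨i, hi, rfl⟩)
  · exact (starProjection_apply_eq_zero_iff _).mpr (hv.mem_orthogonal_span_image hi)

theorem Orthonormal.sum_starProjection_span_image_apply {κ : Type*} [Fintype κ]
    (hv : Orthonormal 𝕜 v) (s : κ → Set ι) [∀ k, (span 𝕜 (v '' s k)).HasOrthogonalProjection]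
    (i : ι) [DecidablePred (i ∈ s ·)] :
    ∑ k, (span 𝕜 (v '' s k)).starProjection (v i) = #{k | i ∈ s k} • v i := by
  simp only [hv.starProjection_span_image_apply, sum_ite, sum_const, smul_zero, add_zero]

end

theorem Finset.filter_univ_eq_Ici_of_isLeast {α : Type*} [Fintype α] [Preorder α]
    [LocallyFiniteOrderTop α] {P : α → Prop} [DecidablePred P] (hP : Monotone P) {a : α}
    (ha : IsLeast {x | P x} a) : ({x | P x} : Finset α) = Ici a := by
  ext x
  simp only [mem_filter_univ, mem_Ici]
  exact ⟨fun hx ↦ ha.2 hx, fun hx ↦ hP hx ha.1⟩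

-- `k` is 0-indexed, so the paper's eigenvalue `(d - k_j + 1)/d` reads `(d - k)/d`.
theorem flag_trick_eigenstructure_general (p d : ℕ) (hd : 0 < d)
    (q : Fin d → ℕ) (hq : StrictMono q)
    (qd : ℕ)
    (u : Fin qd → EuclideanSpace ℝ (Fin p)) (hu : Orthonormal ℝ u)
    (U : Fin d → Submodule ℝ (EuclideanSpace ℝ (Fin p)))
    (hU : ∀ k : Fin d,
      U k = Submodule.span ℝ {x | ∃ j : Fin qd, (j : ℕ) < q k ∧ x = u j}) :
    let P : EuclideanSpace ℝ (Fin p) →L[ℝ] EuclideanSpace ℝ (Fin p) :=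
      ((d : ℝ)⁻¹) • ∑ k : Fin d, (U k).subtypeL.comp (Submodule.orthogonalProjection (U k))
    (∀ (j : Fin qd) (k : Fin d),
        (j : ℕ) < q k → (∀ k' : Fin d, (j : ℕ) < q k' → k ≤ k') →
        P (u j) = (((d : ℝ) - (k : ℕ)) / (d : ℝ)) • u j) ∧
    (∀ x ∈ (U ⟨d - 1, Nat.sub_lt hd one_pos⟩)ᗮ, P x = 0) := by
  intro P
  have hP (x) : P x = (d : ℝ)⁻¹ • ∑ k, (U k).starProjection x := by
    simp only [P, _root_.smul_apply, _root_.sum_apply]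
    rfl
  obtain rfl : U = fun k ↦ span ℝ (u '' {j | (j : ℕ) < q k}) := by
    ext1 k
    simp only [hU k, Set.image, Set.mem_ofPred_eq, eq_comm]
  refine ⟨fun j k hjk hmin ↦ ?_, fun x hx ↦ ?_⟩
  · have h_count : #{k' | (j : ℕ) < q k'} = d - k := by
      rw [filter_univ_eq_Ici_of_isLeast (P := fun k' ↦ (j : ℕ) < q k')
        (fun _ _ h hj ↦ hj.trans_le (hq.monotone h)) ⟨hjk, hmin⟩, Fin.card_Ici]
    rw [hP, hu.sum_starProjection_span_image_apply]
    simp only [Set.mem_ofPred_eq]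
    rw [h_count, ← Nat.cast_smul_eq_nsmul ℝ, smul_smul, Nat.cast_sub k.isLt.le, div_eq_inv_mul]
  · have h_orth (k : Fin d) : x ∈ (span ℝ (u '' {j | (j : ℕ) < q k}))ᗮ := by
      refine orthogonal_le (span_mono (Set.image_mono fun j hj ↦ ?_)) hx
      exact hj.trans_le (hq.monotone (Fin.mk_le_mk.mpr (Nat.le_sub_one_of_lt k.isLt)))
    simp only [hP, (starProjection_apply_eq_zero_iff _).mpr (h_orth _), sum_const_zero, smul_zero]

/-- let `U₁ ⊂ ⋯ ⊂ U_d` be a flag in `ℝ^p` with `dim U_k = q_k` and let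
`u₁, …, u_{q_d}` be an orthonormal basis adapted to the flag (`U_k` is spanned by the
first `q_k` vectors).  Then the flag-trick operator `P = (1/d) Σ_k Π_{U_k}` has each
`u_j` as an eigenvector with eigenvalue `(d − k_j + 1)/d`, where `k_j` is the smallest
(1-indexed) `k` with `j ≤ q_k` (below `k` is 0-indexed, so the eigenvalue reads
`(d − k)/d`); and every vector orthogonal to `U_d` is sent to `0`. -/
theorem flag_trick_eigenstructure (p d : ℕ) (hd : 0 < d)
    (q : Fin d → ℕ) (hq : StrictMono q)
    (qd : ℕ) (hqd : qd = q ⟨d - 1, Nat.sub_lt hd one_pos⟩)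
    (u : Fin qd → EuclideanSpace ℝ (Fin p)) (hu : Orthonormal ℝ u)
    (U : Fin d → Submodule ℝ (EuclideanSpace ℝ (Fin p)))
    (hU : ∀ k : Fin d,
      U k = Submodule.span ℝ {x | ∃ j : Fin qd, (j : ℕ) < q k ∧ x = u j}) :
    let P : EuclideanSpace ℝ (Fin p) →L[ℝ] EuclideanSpace ℝ (Fin p) :=
      ((d : ℝ)⁻¹) • ∑ k : Fin d, (U k).subtypeL.comp (Submodule.orthogonalProjection (U k))
    (∀ (j : Fin qd) (k : Fin d),
        (j : ℕ) < q k → (∀ k' : Fin d, (j : ℕ) < q k' → k ≤ k') →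
        P (u j) = (((d : ℝ) - (k : ℕ)) / (d : ℝ)) • u j) ∧
    (∀ x ∈ (U ⟨d - 1, Nat.sub_lt hd one_pos⟩)ᗮ, P x = 0) :=
  flag_trick_eigenstructure_general p d hd q hq qd u hu U hU
end

section
/- Let P = (1/d) Σ_{k=1}^d Π_{U_k} be the flag-trick operator of a flag U_1 ⊂ ... ⊂ U_d in R^p with distinct dimensions q_1 < ... < q_d. Then P determines the flag uniquely: if two flags with the same signature yield the same operator P, the flags are equal. (The subspaces U_k are recoverable as sums of eigenspaces of P for eigenvalues ≥ (d−k+1)/d.) -/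
noncomputable def projOp (p : ℕ) (U : Submodule ℝ (EuclideanSpace ℝ (Fin p))) :
    EuclideanSpace ℝ (Fin p) →L[ℝ] EuclideanSpace ℝ (Fin p) :=
  U.subtypeL.comp (U.orthogonalProjectionOnto)

/-!
For a monotone family `U`, a vector is killed by the positive operator `∑_{k ≤ j} Π_{U_k}`
exactly when it is orthogonal to every `U_k` with `k ≤ j`, i.e. to `U_j`; so this partial sum
recovers `U_j`. Knowing `U_k` for all `k > j`, the partial sum up to `j` is the full sum minus
known terms, and downward induction on `j` recovers the whole flag from `∑_k Π_{U_k}`.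
-/

open Finset RCLike

namespace Submodule

variable {𝕜 E ι : Type*} [RCLike 𝕜] [NormedAddCommGroup E] [InnerProductSpace 𝕜 E]

theorem sum_starProjection_apply_eq_zero_iff (s : Finset ι) (K : ι → Submodule 𝕜 E)
    [∀ i, (K i).HasOrthogonalProjection] (x : E) :
    (∑ i ∈ s, (K i).starProjection) x = 0 ↔ ∀ i ∈ s, x ∈ (K i)ᗮ := by
  rw [_root_.sum_apply]
  refine ⟨fun h i hi => ?_,
    fun h => sum_eq_zero fun i hi => (starProjection_apply_eq_zero_iff _).2 (h i hi)⟩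
  have hsum : ∑ i ∈ s, re (inner 𝕜 ((K i).starProjection x) x) = 0 := by
    simpa only [sum_inner, map_sum, inner_zero_left, map_zero] using
      congrArg (fun y => re (inner 𝕜 y x)) h
  have hi0 := (sum_eq_zero_iff_of_nonneg fun i _ => re_inner_starProjection_nonneg (K i) x).1
    hsum i hi
  rwa [re_inner_starProjection_eq_normSq, sq_eq_zero_iff, norm_eq_zero,
    orthogonalProjectionOnto_eq_zero_iff] at hi0

theorem ker_sum_starProjection_filter_le [Fintype ι] [LinearOrder ι] {U : ι → Submodule 𝕜 E}
    [∀ i, (U i).HasOrthogonalProjection] (hU : Monotone U) (j : ι) :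
    (∑ k ∈ univ.filter (· ≤ j), (U k).starProjection).ker = (U j)ᗮ := by
  ext x
  rw [LinearMap.mem_ker, ContinuousLinearMap.coe_coe, sum_starProjection_apply_eq_zero_iff]
  refine ⟨fun h => h j (by simp), fun hx k hk => orthogonal_le (hU (by simpa using hk)) hx⟩

theorem eq_of_monotone_of_sum_starProjection_eq [Fintype ι] [LinearOrder ι]
    {U V : ι → Submodule 𝕜 E} [∀ i, (U i).HasOrthogonalProjection]
    [∀ i, (V i).HasOrthogonalProjection] (hU : Monotone U) (hV : Monotone V)
    (h : ∑ k, (U k).starProjection = ∑ k, (V k).starProjection) : U = V := by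
  funext j
  induction j using WellFoundedGT.induction with
  | _ j ih =>
  have hhigh : ∑ k ∈ univ.filter (¬ · ≤ j), (U k).starProjection =
      ∑ k ∈ univ.filter (¬ · ≤ j), (V k).starProjection :=
    sum_congr rfl fun k hk => by congr 1; exact ih k (by simpa using hk)
  have hlow : ∑ k ∈ univ.filter (· ≤ j), (U k).starProjection =
      ∑ k ∈ univ.filter (· ≤ j), (V k).starProjection := by
    rw [← sum_filter_add_sum_filter_not univ (· ≤ j),
      ← sum_filter_add_sum_filter_not univ (· ≤ j), hhigh] at h
    exact add_right_cancel h
  have horth : (U j)ᗮ = (V j)ᗮ := by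
    rw [← ker_sum_starProjection_filter_le hU, ← ker_sum_starProjection_filter_le hV, hlow]
  rw [← (U j).orthogonal_orthogonal, ← (V j).orthogonal_orthogonal, horth]

end Submodule

theorem projOp_eq_starProjection (p : ℕ) (U : Submodule ℝ (EuclideanSpace ℝ (Fin p))) :
    projOp p U = U.starProjection :=
  rfl

theorem flag_trick_determines_flag_general (p d : ℕ)
    (U V : Fin d → Submodule ℝ (EuclideanSpace ℝ (Fin p)))
    (hUmono : Monotone U) (hVmono : Monotone V)
    (hP : (d : ℝ)⁻¹ • ∑ k, projOp p (U k) = (d : ℝ)⁻¹ • ∑ k, projOp p (V k)) :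
    U = V := by
  rcases Nat.eq_zero_or_pos d with rfl | hd
  · exact Subsingleton.elim U V
  have hsum : ∑ k, projOp p (U k) = ∑ k, projOp p (V k) :=
    smul_right_injective _ (inv_ne_zero (Nat.cast_ne_zero.2 hd.ne')) hP
  simp only [projOp_eq_starProjection] at hsum
  exact Submodule.eq_of_monotone_of_sum_starProjection_eq hUmono hVmono hsum

/-- the flag-trick operator `P = (1/d) Σ_k Π_{U_k}` determines the flag
uniquely: if two flags `U₁ ⊂ ⋯ ⊂ U_d` and `V₁ ⊂ ⋯ ⊂ V_d` of `ℝ^p` with the same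
signature `(q₁ < ⋯ < q_d)` yield the same operator `P`, then the flags are equal. -/
theorem flag_trick_determines_flag (p d : ℕ) (hd : 0 < d)
    (q : Fin d → ℕ) (hq : StrictMono q)
    (U V : Fin d → Submodule ℝ (EuclideanSpace ℝ (Fin p)))
    (hUmono : Monotone U) (hVmono : Monotone V)
    (hUdim : ∀ k, Module.finrank ℝ (U k) = q k)
    (hVdim : ∀ k, Module.finrank ℝ (V k) = q k)
    (hP : (d : ℝ)⁻¹ • ∑ k, projOp p (U k) = (d : ℝ)⁻¹ • ∑ k, projOp p (V k)) :
    U = V :=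
  flag_trick_determines_flag_general p d U V hUmono hVmono hP
end
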